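/- Let u be a positive integer coprime to 3. Let A = {(p, k₁, k₂) : p ∈ {0,1}, k₁, k₂ ∈ ℤ, k₁ ≥ p, k₂ ≥ p, k₁ + k₂ ≤ u − 1 + p}. For Λ = (p, k₁, k₂) and Λ' = (p', k₁', k₂') in A define a(Λ, Λ') = u^{−1} (−1)^{p+p'} exp(−(2πi/u)(−1)^{p+p'}(2k₁k₁' + k₁k₂' + k₂k₁' + 2k₂k₂')). Then for any Λ₁ = (p₁, k_{1,1}, k_{1,2}), Λ₂ = (p₂, k_{2,1}, k_{2,2}), Λ₃ = (p₃, k_{3,1}, k_{3,2}) in A, the Verlinde sum ∑_{Λ ∈ A} a(Λ₁, Λ) a(Λ₂, Λ) a(Λ₃, Λ) / a((0,0,0), Λ) equals (−1)^{p₁+p₂+p₃} if u divides (−1)^{p₁} k_{1,i} + (−1)^{p₂} k_{2,i} + (−1)^{p₃} k_{3,i} for both i = 1 and i = 2, and equals 0 otherwise. -/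

import Mathlib

/-- The parameter set `A = {(p,k₁,k₂) : p ∈ {0,1}, kᵢ ∈ ℤ, kᵢ ≥ p, k₁ + k₂ ≤ u - 1 + p}`
indexing the principal admissible modules of affine `sl₃` at boundary level
`k = 3/u - 3`. -/
noncomputable def sl3Adm (u : ℕ) : Finset (ℕ × ℤ × ℤ) :=
  (Finset.range 2 ×ˢ Finset.Icc (0 : ℤ) u ×ˢ Finset.Icc (0 : ℤ) u).filter
    (fun x => (x.1 : ℤ) ≤ x.2.1 ∧ (x.1 : ℤ) ≤ x.2.2 ∧ x.2.1 + x.2.2 ≤ (u : ℤ) - 1 + x.1)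

/-- The (unnormalized) modular S-matrix for the boundary principal admissible modules
of affine `sl₃`:
`a(Λ,Λ') = u⁻¹ (-1)^{p+p'} exp(-(2πi/u)(-1)^{p+p'}(2k₁k₁' + k₁k₂' + k₂k₁' + 2k₂k₂'))`. -/
noncomputable def Ssl3 (u : ℕ) (Λ Λ' : ℕ × ℤ × ℤ) : ℂ :=
  (u : ℂ)⁻¹ * (-1) ^ (Λ.1 + Λ'.1) *
    Complex.exp (-(2 * Real.pi * Complex.I / u) * (-1 : ℂ) ^ (Λ.1 + Λ'.1) *
      ((2 * Λ.2.1 * Λ'.2.1 + Λ.2.1 * Λ'.2.2 + Λ.2.2 * Λ'.2.1 + 2 * Λ.2.2 * Λ'.2.2 : ℤ) : ℂ))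

noncomputable def xi (u : ℕ) (n : ℤ) : ℂ :=
  Complex.exp (-(2 * Real.pi * Complex.I / u) * n)

lemma xi_add (u : ℕ) (m n : ℤ) : xi u (m + n) = xi u m * xi u n := by
  rw [xi, xi, xi, ← Complex.exp_add]
  push_cast
  ring_nf

lemma xi_zero (u : ℕ) : xi u 0 = 1 := by simp [xi]

lemma xi_mul_u (u : ℕ) (hu : 0 < u) (t : ℤ) : xi u ((u : ℤ) * t) = 1 := by
  have hu' : (u : ℂ) ≠ 0 := by exact_mod_cast hu.ne'
  rw [xi]
  have h : -(2 * Real.pi * Complex.I / u) * (((u : ℤ) * t : ℤ) : ℂ)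
      = (-t : ℤ) * (2 * Real.pi * Complex.I) := by
    push_cast
    field_simp
  rw [h, Complex.exp_int_mul_two_pi_mul_I]

lemma xi_pow (u : ℕ) (A : ℤ) (n : ℕ) : xi u (A * n) = xi u A ^ n := by
  induction n with
  | zero => simp [xi_zero]
  | succ n ih => push_cast [mul_add, xi_add, ih]; ring

lemma xi_ne_one (u : ℕ) (hu : 0 < u) (A : ℤ) (hA : ¬ (u : ℤ) ∣ A) : xi u A ≠ 1 := by
  intro hone
  rw [xi, Complex.exp_eq_one_iff] at hone
  obtain ⟨n, hn⟩ := hone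
  apply hA
  have hu' : (u : ℂ) ≠ 0 := by exact_mod_cast hu.ne'
  have hpi : ((Real.pi : ℂ)) ≠ 0 := by exact_mod_cast Real.pi_ne_zero
  have h2 : ((A : ℂ)) = ((-n * u : ℤ) : ℂ) := by
    field_simp at hn
    have h3 : (2 * (Real.pi : ℂ) * Complex.I) * (-(A : ℂ))
        = (2 * (Real.pi : ℂ) * Complex.I) * ((n : ℂ) * u) := by linear_combination (2 * (Real.pi : ℂ) * Complex.I) * hn
    have hne : (2 * (Real.pi : ℂ) * Complex.I) ≠ 0 := by
      simp [hpi, Complex.I_ne_zero]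
    have h4 := mul_left_cancel₀ hne h3
    push_cast
    linear_combination -h4
  have := Int.cast_injective (α := ℂ) h2
  exact ⟨-n, by rw [this]; ring⟩

lemma xi_geom (u : ℕ) (hu : 0 < u) (A : ℤ) :
    ∑ a ∈ Finset.Icc (0 : ℤ) ((u : ℤ) - 1), xi u (A * a) = if (u : ℤ) ∣ A then (u : ℂ) else 0 := by
  have hre : ∑ a ∈ Finset.Icc (0 : ℤ) ((u : ℤ) - 1), xi u (A * a)
      = ∑ n ∈ Finset.range u, xi u A ^ n := by
    refine Finset.sum_nbij' (fun a => a.toNat) (fun n => (n : ℤ)) ?_ ?_ ?_ ?_ ?_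
    · intro a ha; simp only [Finset.mem_Icc] at ha; simp only [Finset.mem_range]; omega
    · intro n hn; simp only [Finset.mem_range] at hn; simp only [Finset.mem_Icc]; omega
    · intro a ha; simp only [Finset.mem_Icc] at ha; omega
    · intro n hn; simp
    · intro a ha; simp only [Finset.mem_Icc] at ha
      have h5 : ((a.toNat : ℤ)) = a := by omega
      rw [← xi_pow, h5]
  rw [hre]
  by_cases h : (u : ℤ) ∣ A
  · rw [if_pos h]
    obtain ⟨t, ht⟩ := h
    have h1 : xi u A = 1 := by rw [ht, xi_mul_u u hu]
    simp [h1]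
  · rw [if_neg h]
    have h1 : xi u A ≠ 1 := xi_ne_one u hu A h
    rw [geom_sum_eq h1]
    have h2 : xi u A ^ u = 1 := by
      rw [← xi_pow, mul_comm, xi_mul_u u hu]
    rw [h2]
    simp


/-- Verlinde's formula for the fusion coefficients of the boundary principal admissible
modules of affine `sl₃` at level `k = 3/u - 3`, `gcd(u,3) = 1`: the Verlinde sum
`∑_{Λ ∈ A} a(Λ₁,Λ) a(Λ₂,Λ) a(Λ₃,Λ) / a((0,0,0),Λ)` equals `(-1)^{p₁+p₂+p₃}` if
`u ∣ (-1)^{p₁} k_{1,i} + (-1)^{p₂} k_{2,i} + (-1)^{p₃} k_{3,i}` for both `i = 1, 2`,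
and equals `0` otherwise. -/
theorem verlinde_sl3 (u : ℕ) (hu : 0 < u) (hu3 : Nat.Coprime u 3)
    (Λ₁ Λ₂ Λ₃ : ℕ × ℤ × ℤ)
    (h₁ : Λ₁ ∈ sl3Adm u) (h₂ : Λ₂ ∈ sl3Adm u) (h₃ : Λ₃ ∈ sl3Adm u) :
    ∑ Λ ∈ sl3Adm u, Ssl3 u Λ₁ Λ * Ssl3 u Λ₂ Λ * Ssl3 u Λ₃ Λ / Ssl3 u (0, 0, 0) Λ =
      if ((u : ℤ) ∣ (-1) ^ Λ₁.1 * Λ₁.2.1 + (-1) ^ Λ₂.1 * Λ₂.2.1 + (-1) ^ Λ₃.1 * Λ₃.2.1) ∧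
         ((u : ℤ) ∣ (-1) ^ Λ₁.1 * Λ₁.2.2 + (-1) ^ Λ₂.1 * Λ₂.2.2 + (-1) ^ Λ₃.1 * Λ₃.2.2) then
        (-1 : ℂ) ^ (Λ₁.1 + Λ₂.1 + Λ₃.1)
      else 0 := by
  have hu' : (u : ℂ) ≠ 0 := by exact_mod_cast hu.ne'
  set m₁ : ℤ := (-1) ^ Λ₁.1 * Λ₁.2.1 + (-1) ^ Λ₂.1 * Λ₂.2.1 + (-1) ^ Λ₃.1 * Λ₃.2.1 with hm₁
  set m₂ : ℤ := (-1) ^ Λ₁.1 * Λ₁.2.2 + (-1) ^ Λ₂.1 * Λ₂.2.2 + (-1) ^ Λ₃.1 * Λ₃.2.2 with hm₂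
  set A : ℤ := 2 * m₁ + m₂ with hA
  set B : ℤ := m₁ + 2 * m₂ with hB
  set C : ℂ := (-1 : ℂ) ^ (Λ₁.1 + Λ₂.1 + Λ₃.1) * ((u : ℂ)⁻¹ * (u : ℂ)⁻¹) with hC
  -- termwise identity
  have hterm : ∀ Λ ∈ sl3Adm u,
      Ssl3 u Λ₁ Λ * Ssl3 u Λ₂ Λ * Ssl3 u Λ₃ Λ / Ssl3 u (0, 0, 0) Λ
        = C * xi u (A * ((-1) ^ Λ.1 * Λ.2.1) + B * ((-1) ^ Λ.1 * Λ.2.2)) := by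
    rintro ⟨p, a, b⟩ _
    have hden : Ssl3 u (0, 0, 0) (p, a, b) = (u : ℂ)⁻¹ * (-1) ^ p := by
      simp [Ssl3]
    have hdne : ((u : ℂ)⁻¹ * (-1 : ℂ) ^ p) ≠ 0 :=
      mul_ne_zero (inv_ne_zero hu') (pow_ne_zero _ (by norm_num))
    rw [hden, div_eq_iff hdne]
    simp only [Ssl3]
    set E₁ := Complex.exp (-(2 * Real.pi * Complex.I / u) * (-1 : ℂ) ^ (Λ₁.1 + p) *
      ((2 * Λ₁.2.1 * a + Λ₁.2.1 * b + Λ₁.2.2 * a + 2 * Λ₁.2.2 * b : ℤ) : ℂ)) with hE₁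
    set E₂ := Complex.exp (-(2 * Real.pi * Complex.I / u) * (-1 : ℂ) ^ (Λ₂.1 + p) *
      ((2 * Λ₂.2.1 * a + Λ₂.2.1 * b + Λ₂.2.2 * a + 2 * Λ₂.2.2 * b : ℤ) : ℂ)) with hE₂
    set E₃ := Complex.exp (-(2 * Real.pi * Complex.I / u) * (-1 : ℂ) ^ (Λ₃.1 + p) *
      ((2 * Λ₃.2.1 * a + Λ₃.2.1 * b + Λ₃.2.2 * a + 2 * Λ₃.2.2 * b : ℤ) : ℂ)) with hE₃
    set X := xi u (A * ((-1) ^ p * a) + B * ((-1) ^ p * b)) with hX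
    have hsq : ((-1 : ℂ) ^ p) * ((-1 : ℂ) ^ p) = 1 := by
      rw [← pow_add, ← two_mul, pow_mul]; norm_num
    have hE : E₁ * E₂ * E₃ = X := by
      rw [hE₁, hE₂, hE₃, hX, ← Complex.exp_add, ← Complex.exp_add, xi]
      congr 1
      simp only [hA, hB, hm₁, hm₂]
      push_cast [pow_add]
      ring
    rw [hC]
    linear_combination
      ((u : ℂ)⁻¹ * (u : ℂ)⁻¹ * (u : ℂ)⁻¹ *
        ((-1 : ℂ) ^ Λ₁.1 * (-1 : ℂ) ^ Λ₂.1 * (-1 : ℂ) ^ Λ₃.1) *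
        ((-1 : ℂ) ^ p * (-1 : ℂ) ^ p * (-1 : ℂ) ^ p)) * hE +
      ((u : ℂ)⁻¹ * (u : ℂ)⁻¹ * (u : ℂ)⁻¹ *
        ((-1 : ℂ) ^ Λ₁.1 * (-1 : ℂ) ^ Λ₂.1 * (-1 : ℂ) ^ Λ₃.1) * (-1 : ℂ) ^ p * X) * hsq
  rw [Finset.sum_congr rfl hterm, ← Finset.mul_sum]
  have hre : ∑ Λ ∈ sl3Adm u, xi u (A * ((-1) ^ Λ.1 * Λ.2.1) + B * ((-1) ^ Λ.1 * Λ.2.2))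
      = ∑ x ∈ Finset.Icc (0 : ℤ) ((u : ℤ) - 1) ×ˢ Finset.Icc (0 : ℤ) ((u : ℤ) - 1),
          xi u (A * x.1 + B * x.2) := by
    refine Finset.sum_nbij'
      (fun Λ => if Λ.1 = 0 then (Λ.2.1, Λ.2.2) else ((u : ℤ) - Λ.2.1, (u : ℤ) - Λ.2.2))
      (fun x => if x.1 + x.2 ≤ (u : ℤ) - 1 then ((0 : ℕ), x.1, x.2)
        else (1, (u : ℤ) - x.1, (u : ℤ) - x.2)) ?_ ?_ ?_ ?_ ?_
    · rintro ⟨p, a, b⟩ hmem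
      simp only [sl3Adm, Finset.mem_filter, Finset.mem_product, Finset.mem_range,
        Finset.mem_Icc] at hmem ⊢
      split_ifs with h <;> constructor <;> omega
    · rintro ⟨x, y⟩ hmem
      simp only [Finset.mem_Icc, Finset.mem_product] at hmem
      simp only [sl3Adm, Finset.mem_filter, Finset.mem_product, Finset.mem_range,
        Finset.mem_Icc]
      split_ifs with h <;> simp only [] <;> push_cast <;> simp only [true_and] <;> omega
    · rintro ⟨p, a, b⟩ hmem
      simp only [sl3Adm, Finset.mem_filter, Finset.mem_product, Finset.mem_range,
        Finset.mem_Icc] at hmem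
      by_cases hp : p = 0
      · subst hp
        show (if a + b ≤ (u : ℤ) - 1 then ((0 : ℕ), a, b)
            else (1, (u : ℤ) - a, (u : ℤ) - b)) = ((0 : ℕ), a, b)
        rw [if_pos (show a + b ≤ (u : ℤ) - 1 by push_cast at hmem; omega)]
      · have hp1 : p = 1 := by omega
        subst hp1
        show (if (u : ℤ) - a + ((u : ℤ) - b) ≤ (u : ℤ) - 1 then ((0 : ℕ), (u : ℤ) - a, (u : ℤ) - b)
            else (1, (u : ℤ) - ((u : ℤ) - a), (u : ℤ) - ((u : ℤ) - b))) = ((1 : ℕ), a, b)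
        rw [if_neg (show ¬((u : ℤ) - a + ((u : ℤ) - b) ≤ (u : ℤ) - 1) by
          push_cast at hmem; omega)]
        simp only [Prod.mk.injEq]
        refine ⟨by trivial, by omega, by omega⟩
    · rintro ⟨x, y⟩ hmem
      simp only [Finset.mem_Icc, Finset.mem_product] at hmem
      beta_reduce
      by_cases hxy : x + y ≤ (u : ℤ) - 1
      · rw [if_pos hxy, if_pos rfl]
      · rw [if_neg hxy, if_neg (by omega)]
        simp only [Prod.mk.injEq]
        refine ⟨by omega, by omega⟩
    · rintro ⟨p, a, b⟩ hmem
      simp only [sl3Adm, Finset.mem_filter, Finset.mem_product, Finset.mem_range,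
        Finset.mem_Icc] at hmem
      dsimp only
      split_ifs with h
      · subst h; norm_num
      · have hp : p = 1 := by omega
        subst hp
        have key : A * ((u : ℤ) - a) + B * ((u : ℤ) - b)
            = (A * ((-1) ^ 1 * a) + B * ((-1) ^ 1 * b)) + (u : ℤ) * (A + B) := by ring
        rw [key, xi_add _ _ ((u : ℤ) * (A + B)), xi_mul_u u hu, mul_one]
  rw [hre, Finset.sum_product]
  simp_rw [xi_add]
  rw [← Finset.sum_mul_sum, xi_geom u hu A, xi_geom u hu B]
  have hcop : IsCoprime (u : ℤ) 3 := by
    rw [Int.isCoprime_iff_gcd_eq_one]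
    exact_mod_cast hu3
  have hiff : ((u : ℤ) ∣ A ∧ (u : ℤ) ∣ B) ↔ ((u : ℤ) ∣ m₁ ∧ (u : ℤ) ∣ m₂) := by
    constructor
    · rintro ⟨ha, hb⟩
      have d1 : (u : ℤ) ∣ m₁ * 3 := by
        have := dvd_sub (ha.mul_left 2) hb
        have e : 2 * A - B = m₁ * 3 := by rw [hA, hB]; ring
        rwa [e] at this
      have d2 : (u : ℤ) ∣ m₂ * 3 := by
        have := dvd_sub (hb.mul_left 2) ha
        have e : 2 * B - A = m₂ * 3 := by rw [hA, hB]; ring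
        rwa [e] at this
      exact ⟨hcop.dvd_of_dvd_mul_right d1, hcop.dvd_of_dvd_mul_right d2⟩
    · rintro ⟨d1, d2⟩
      exact ⟨by rw [hA]; exact dvd_add (d1.mul_left 2) d2,
             by rw [hB]; exact dvd_add d1 (d2.mul_left 2)⟩
  by_cases h : ((u : ℤ) ∣ m₁) ∧ ((u : ℤ) ∣ m₂)
  · obtain ⟨ha, hb⟩ := hiff.mpr h
    rw [if_pos h, if_pos ha, if_pos hb, hC]
    field_simp
  · rw [if_neg h]
    have hnot : ¬ ((u : ℤ) ∣ A ∧ (u : ℤ) ∣ B) := fun hc => h (hiff.mp hc)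
    rcases Decidable.not_and_iff_or_not.mp hnot with h' | h'
    · rw [if_neg h', zero_mul, mul_zero]
    · rw [if_neg h', mul_zero, mul_zero]
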